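/- In the full sharing scenario with frequency-selective fading, no noise, and α = 4, the coverage probability is p(θ) = Σ_{k=1}^N C(N,k)(−1)^{k+1} / (1 + Σ_{l=1}^k C(k,l)(−1)^{l+1} 𝔷(θ,4,l)), where 𝔷(θ,4,l) = (2θ^l/(4l−2))·₂F₁(l, l−1/2; l+1/2; −θ). -/

import Mathlib

/-! Each summand on the left is `πλ ∫₀^∞ exp(-πλ C_k r) dr = 1 / C_k`, provided
`C_k = 1 + Σ_l C(k,l) (-1)^(l+1) 𝔷(θ,4,l)` is positive. For positivity, Euler's integral for
`₂F₁` with `c = b + 1` gives `𝔷(θ,4,l) = ∫₀¹ t^(-3/2)/2 · (θt/(1+θt))^l dt`, so by the binomial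
theorem the alternating sum is `∫₀¹ t^(-3/2)/2 · (1 - (1+θt)^(-k)) dt ≥ 0`. -/

open Real MeasureTheory Finset

noncomputable def hyp2F1 (a b c z : ℝ) : ℝ :=
  (Real.Gamma c / (Real.Gamma b * Real.Gamma (c - b))) *
    ∫ t in Set.Ioo (0 : ℝ) 1, t ^ (b - 1) * (1 - t) ^ (c - b - 1) * (1 - z * t) ^ (-a)

/-- `𝔷(θ,4,l) = (2θ^l/(4l−2))·₂F₁(l, l−1/2; l+1/2; −θ)`. -/
noncomputable def zFun4 (θ : ℝ) (l : ℕ) : ℝ :=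
  2 * θ ^ l / (4 * l - 2) * hyp2F1 l ((l : ℝ) - 1 / 2) ((l : ℝ) + 1 / 2) (-θ)

theorem sum_Icc_choose_mul_neg_one_pow_mul_pow {R : Type*} [CommRing R] (x : R) (k : ℕ) :
    ∑ l ∈ Icc 1 k, (k.choose l : R) * (-1) ^ (l + 1) * x ^ l = 1 - (1 - x) ^ k := by
  have hbinom : (1 - x) ^ k = ∑ l ∈ range (k + 1), (k.choose l : R) * (-1) ^ l * x ^ l := by
    rw [sub_eq_neg_add, add_pow]
    refine sum_congr rfl fun l _ => ?_
    rw [neg_pow]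
    ring
  rw [hbinom, sum_range_succ', ← Ico_add_one_right_eq_Icc, sum_Ico_eq_sum_range,
    Nat.add_sub_cancel]
  simp only [add_comm 1, Nat.choose_zero_right, pow_zero, Nat.cast_one, mul_one, pow_succ,
    neg_mul, mul_neg, sum_neg_distrib]
  ring

theorem sum_choose_mul_neg_one_pow_mul_integral_nonneg {α : Type*} [MeasurableSpace α]
    {μ : Measure α} {w g : α → ℝ} (hw : ∀ᵐ x ∂μ, 0 ≤ w x) (hg : ∀ᵐ x ∂μ, g x ∈ Set.Icc 0 1)
    (hint : ∀ l, 1 ≤ l → Integrable (fun x => w x * g x ^ l) μ) (k : ℕ) :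
    0 ≤ ∑ l ∈ Icc 1 k, (k.choose l : ℝ) * (-1) ^ (l + 1) * ∫ x, w x * g x ^ l ∂μ := by
  simp_rw [← integral_const_mul]
  rw [← integral_finsetSum _ fun l hl => (hint l (mem_Icc.mp hl).1).const_mul _]
  refine integral_nonneg_of_ae ?_
  filter_upwards [hw, hg] with x hwx ⟨hg0, hg1⟩
  have hsum : ∑ l ∈ Icc 1 k, (k.choose l : ℝ) * (-1) ^ (l + 1) * (w x * g x ^ l)
      = w x * (1 - (1 - g x) ^ k) := by
    rw [← sum_Icc_choose_mul_neg_one_pow_mul_pow, mul_sum]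
    exact sum_congr rfl fun l _ => by ring
  rw [Pi.zero_apply, hsum]
  exact mul_nonneg hwx (sub_nonneg.mpr (pow_le_one₀ (by linarith) (by linarith)))

theorem hyp2F1_add_one_right (a : ℝ) {b : ℝ} (hb : 0 < b) (z : ℝ) :
    hyp2F1 a b (b + 1) z = b * ∫ t in Set.Ioo (0 : ℝ) 1, t ^ (b - 1) * (1 - z * t) ^ (-a) := by
  rw [hyp2F1, add_sub_cancel_left, sub_self, Gamma_add_one hb.ne', Gamma_one, mul_one,
    mul_div_cancel_right₀ _ (Gamma_pos_of_pos hb).ne']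
  simp only [rpow_zero, mul_one]

theorem zFun4_eq_integral {θ : ℝ} (hθ : 0 ≤ θ) {l : ℕ} (hl : 1 ≤ l) :
    zFun4 θ l =
      ∫ t in Set.Ioo (0 : ℝ) 1, 1 / 2 * t ^ (-(3 : ℝ) / 2) * (θ * t / (1 + θ * t)) ^ l := by
  have hl' : (1 : ℝ) ≤ l := by exact_mod_cast hl
  rw [zFun4, show (l : ℝ) + 1 / 2 = (l - 1 / 2) + 1 by ring,
    hyp2F1_add_one_right _ (by linarith), ← mul_assoc,
    show 2 * θ ^ l / (4 * l - 2) * ((l : ℝ) - 1 / 2) = θ ^ l / 2 by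
      field_simp [show (4 * l - 2 : ℝ) ≠ 0 by linarith]; ring,
    ← integral_const_mul]
  refine setIntegral_congr_fun measurableSet_Ioo fun t ⟨ht0, _⟩ => ?_
  have hd : 0 < 1 + θ * t := by positivity
  rw [show (l : ℝ) - 1 / 2 - 1 = l + (-(3 : ℝ) / 2) by ring, rpow_add ht0, rpow_natCast,
    show 1 - -θ * t = 1 + θ * t by ring, rpow_neg hd.le, rpow_natCast, div_pow, mul_pow]
  field_simp

theorem integrableOn_rpow_neg_three_halves_mul_pow {θ : ℝ} (hθ : 0 ≤ θ) {l : ℕ} (hl : 1 ≤ l) :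
    IntegrableOn (fun t : ℝ => 1 / 2 * t ^ (-(3 : ℝ) / 2) * (θ * t / (1 + θ * t)) ^ l)
      (Set.Ioo 0 1) := by
  have hbound : IntegrableOn (fun t : ℝ => θ ^ l / 2 * t ^ (-(1 : ℝ) / 2)) (Set.Ioo 0 1) :=
    ((intervalIntegral.integrableOn_Ioo_rpow_iff one_pos).mpr (by norm_num)).const_mul _
  refine Integrable.mono hbound (by fun_prop) ((ae_restrict_iff' measurableSet_Ioo).mpr ?_)
  filter_upwards with t ⟨ht0, ht1⟩
  have hd : 0 < 1 + θ * t := by positivity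
  have hg : θ * t / (1 + θ * t) ≤ θ * t := div_le_self (by positivity) (by nlinarith)
  have hpow : t ^ (-(3 : ℝ) / 2) * t ^ l ≤ t ^ (-(1 : ℝ) / 2) := by
    rw [← rpow_natCast, ← rpow_add ht0]
    have hl' : (1 : ℝ) ≤ l := by exact_mod_cast hl
    exact rpow_le_rpow_of_exponent_ge ht0 ht1.le (by linarith)
  rw [norm_of_nonneg (by positivity), norm_of_nonneg (by positivity)]
  calc 1 / 2 * t ^ (-(3 : ℝ) / 2) * (θ * t / (1 + θ * t)) ^ l
      ≤ 1 / 2 * t ^ (-(3 : ℝ) / 2) * (θ * t) ^ l := by gcongr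
    _ = θ ^ l / 2 * (t ^ (-(3 : ℝ) / 2) * t ^ l) := by ring
    _ ≤ θ ^ l / 2 * t ^ (-(1 : ℝ) / 2) := by gcongr

theorem one_add_sum_choose_mul_zFun4_pos {θ : ℝ} (hθ : 0 ≤ θ) (k : ℕ) :
    0 < 1 + ∑ l ∈ Icc 1 k, (k.choose l : ℝ) * (-1) ^ (l + 1) * zFun4 θ l := by
  have hz : ∀ l ∈ Icc 1 k, (k.choose l : ℝ) * (-1) ^ (l + 1) * zFun4 θ l =
      (k.choose l : ℝ) * (-1) ^ (l + 1) * ∫ t in Set.Ioo (0 : ℝ) 1,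
        1 / 2 * t ^ (-(3 : ℝ) / 2) * (θ * t / (1 + θ * t)) ^ l := fun l hl => by
    rw [zFun4_eq_integral hθ (mem_Icc.mp hl).1]
  have hnonneg := sum_choose_mul_neg_one_pow_mul_integral_nonneg
    (μ := volume.restrict (Set.Ioo 0 1)) (w := fun t => 1 / 2 * t ^ (-(3 : ℝ) / 2))
    (g := fun t => θ * t / (1 + θ * t))
    (ae_restrict_of_forall_mem measurableSet_Ioo fun t ht => by have := ht.1; positivity)
    (ae_restrict_of_forall_mem measurableSet_Ioo fun t ⟨ht0, _⟩ =>
      ⟨by positivity, div_le_one_of_le₀ (by linarith) (by positivity)⟩)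
    (fun l hl => integrableOn_rpow_neg_three_halves_mul_pow hθ hl) k
  rw [sum_congr rfl hz]
  linarith

theorem full_sharing_freq_selective_coverage_general (N : ℕ) (lam θ : ℝ)
    (hlam : 0 < lam) (hθ : 0 ≤ θ) :
    (π * lam * ∑ k ∈ Finset.Icc 1 N, (N.choose k : ℝ) * (-1) ^ (k + 1) *
        ∫ r in Set.Ioi (0 : ℝ),
          exp (-π * r * lam *
            (1 + ∑ l ∈ Finset.Icc 1 k, (k.choose l : ℝ) * (-1) ^ (l + 1) * zFun4 θ l))) =
      ∑ k ∈ Finset.Icc 1 N, (N.choose k : ℝ) * (-1) ^ (k + 1) /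
        (1 + ∑ l ∈ Finset.Icc 1 k, (k.choose l : ℝ) * (-1) ^ (l + 1) * zFun4 θ l) := by
  rw [mul_sum]
  refine sum_congr rfl fun k _ => ?_
  set C := 1 + ∑ l ∈ Icc 1 k, (k.choose l : ℝ) * (-1) ^ (l + 1) * zFun4 θ l
  have hC : 0 < C := one_add_sum_choose_mul_zFun4_pos hθ k
  have hrate : -(π * lam * C) < 0 := neg_neg_of_pos (by positivity)
  simp_rw [show ∀ r, -π * r * lam * C = -(π * lam * C) * r from fun r => by ring]
  rw [integral_exp_mul_Ioi hrate, mul_zero, exp_zero]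
  field_simp

/-- Full sharing with frequency-selective fading (no noise, `α = 4`): the coverage
probability equals
`Σ_{k=1}^N C(N,k)(−1)^{k+1} / (1 + Σ_{l=1}^k C(k,l)(−1)^{l+1} 𝔷(θ,4,l))`. -/
theorem full_sharing_freq_selective_coverage (N : ℕ) (hN : 1 ≤ N) (lam θ : ℝ)
    (hlam : 0 < lam) (hθ : 0 ≤ θ) :
    (π * lam * ∑ k ∈ Finset.Icc 1 N, (N.choose k : ℝ) * (-1) ^ (k + 1) *
        ∫ r in Set.Ioi (0 : ℝ),
          exp (-π * r * lam *
            (1 + ∑ l ∈ Finset.Icc 1 k, (k.choose l : ℝ) * (-1) ^ (l + 1) * zFun4 θ l))) =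
      ∑ k ∈ Finset.Icc 1 N, (N.choose k : ℝ) * (-1) ^ (k + 1) /
        (1 + ∑ l ∈ Finset.Icc 1 k, (k.choose l : ℝ) * (-1) ^ (l + 1) * zFun4 θ l) :=
  full_sharing_freq_selective_coverage_general N lam θ hlam hθ
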